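/- Let $a : \mathbb{N} \to \mathbb{R}$ with $a_k \geq 0$ for all $k$, let $t : \mathbb{N} \to \mathbb{R}$, let $\tau > 0$, $\rho > 0$, and let $\ell \geq 1$ be a natural number. Suppose $t_{k+1} - t_k \geq \tau$ for all $k$, and $a_k \leq a_{k-\ell} \, e^{-\rho (t_k - t_{k-1})}$ for all $k \geq \ell$. Then $a_k \to 0$ as $k \to \infty$. -/
import Mathlib


theorem stmt_5 (a : ℕ → ℝ) (ha : ∀ k, 0 ≤ a k) (t : ℕ → ℝ)
    (τ ρ : ℝ) (hτ : 0 < τ) (hρ : 0 < ρ) (ℓ : ℕ) (hℓ : 1 ≤ ℓ)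
    (ht : ∀ k, τ ≤ t (k + 1) - t k)
    (h : ∀ k, ℓ ≤ k → a k ≤ a (k - ℓ) * Real.exp (-ρ * (t k - t (k - 1)))) :
    Filter.Tendsto a Filter.atTop (nhds 0) := by
  set c : ℝ := Real.exp (-ρ * τ) with hcdef
  have hc0 : 0 < c := Real.exp_pos _
  have hc1 : c < 1 := by
    rw [hcdef, Real.exp_lt_one_iff]
    nlinarith
  have key : ∀ k, ℓ ≤ k → a k ≤ c * a (k - ℓ) := by
    intro k hk
    have hk1 : 1 ≤ k := le_trans hℓ hk
    have htk : τ ≤ t k - t (k - 1) := by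
      have := ht (k - 1)
      rwa [Nat.sub_add_cancel hk1] at this
    have hexp : Real.exp (-ρ * (t k - t (k - 1))) ≤ c := by
      apply Real.exp_le_exp.mpr
      nlinarith
    calc a k ≤ a (k - ℓ) * Real.exp (-ρ * (t k - t (k - 1))) := h k hk
      _ ≤ a (k - ℓ) * c := by
          exact mul_le_mul_of_nonneg_left hexp (ha _)
      _ = c * a (k - ℓ) := mul_comm _ _
  have iter : ∀ m r, a (r + m * ℓ) ≤ c ^ m * a r := by
    intro m
    induction m with
    | zero => intro r; simp
    | succ n ih =>
      intro r
      have hle : ℓ ≤ r + (n + 1) * ℓ := by nlinarith [Nat.le_add_left ℓ r]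
      have hsub : r + (n + 1) * ℓ - ℓ = r + n * ℓ := by
        have : r + (n + 1) * ℓ = (r + n * ℓ) + ℓ := by ring
        omega
      calc a (r + (n + 1) * ℓ) ≤ c * a (r + (n + 1) * ℓ - ℓ) := key _ hle
        _ = c * a (r + n * ℓ) := by rw [hsub]
        _ ≤ c * (c ^ n * a r) := mul_le_mul_of_nonneg_left (ih r) hc0.le
        _ = c ^ (n + 1) * a r := by ring
  obtain ⟨M, hM⟩ : ∃ M : ℝ, ∀ r < ℓ, a r ≤ M := by
    obtain ⟨M, hM⟩ := (Finset.range ℓ).image a |>.exists_le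
    exact ⟨M, fun r hr => hM _ (Finset.mem_image_of_mem a (Finset.mem_range.mpr hr))⟩
  have hM0 : 0 ≤ M := le_trans (ha 0) (hM 0 hℓ)
  have bound : ∀ n, a n ≤ c ^ (n / ℓ) * M := by
    intro n
    have hn : n % ℓ + (n / ℓ) * ℓ = n := by
      rw [mul_comm]; exact Nat.mod_add_div n ℓ
    calc a n = a (n % ℓ + (n / ℓ) * ℓ) := by rw [hn]
      _ ≤ c ^ (n / ℓ) * a (n % ℓ) := iter _ _
      _ ≤ c ^ (n / ℓ) * M :=
          mul_le_mul_of_nonneg_left (hM _ (Nat.mod_lt _ (by omega))) (pow_pos hc0 _).le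
  have hpow : Filter.Tendsto (fun n : ℕ => c ^ (n / ℓ) * M) Filter.atTop (nhds 0) := by
    have h1 : Filter.Tendsto (fun n : ℕ => c ^ (n / ℓ)) Filter.atTop (nhds 0) :=
      (tendsto_pow_atTop_nhds_zero_of_lt_one hc0.le hc1).comp
        (Nat.tendsto_div_const_atTop (by omega))
    simpa using h1.mul_const M
  exact squeeze_zero ha bound hpow
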